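/- arXiv:2007.07134 — 3 statements merged into one kernel-verified Lean document; each statement's English description precedes it below -/
import Mathlib

section
/- Let Φ be Schur stable with √γ·Φ Schur stable for γ ∈ (0,1), Ω ⪰ 0, and define X_0 = 0 and X_i = ∑_{j=0}^{i-1} Φ^j Ω (Φᵀ)^j for i ≥ 1. Let P̃ solve P̃ = γ Φᵀ P̃ Φ + Cᵀ C. Then ∑_{i=0}^∞ γ^i tr(Cᵀ C X_i) = (γ/(1−γ)) tr(Ω P̃). -/
/-!
Iterating the Stein equation `P = (γ • Φᵀ) * P * Φ + Cᵀ * C` gives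
`P = ∑ⱼ γ ^ j • (Φᵀ) ^ j * Cᵀ * C * Φ ^ j`, so `tr (Ω * P) = ∑ⱼ γ ^ j * sⱼ` with
`sⱼ = tr (Cᵀ * C * Φ ^ j * Ω * (Φᵀ) ^ j) ≥ 0`. Since `tr (Cᵀ * C * X i) = ∑_{j < i} sⱼ`, the
left-hand side is the Cauchy product of `(γ ^ j * sⱼ)` with the geometric series `(γ ^ (d + 1))`,
whose sum is `γ / (1 - γ)`.
-/

open Matrix Filter Finset

theorem eq_sum_range_pow_mul_mul_pow_add {R : Type*} [Semiring R] {P A B Q : R}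
    (hP : P = B * P * A + Q) (k : ℕ) :
    P = ∑ j ∈ range k, B ^ j * Q * A ^ j + B ^ k * P * A ^ k := by
  induction k with
  | zero => simp
  | succ k ih =>
    calc P = ∑ j ∈ range k, B ^ j * Q * A ^ j + B ^ k * (B * P * A + Q) * A ^ k := by
          rw [← hP]; exact ih
      _ = _ := by
          rw [sum_range_succ, pow_succ B, pow_succ' A]
          simp only [mul_add, add_mul, mul_assoc]
          abel

theorem tendsto_sum_range_pow_mul_mul_pow {R : Type*} [Ring R] [TopologicalSpace R]
    [IsTopologicalRing R] {P A B Q : R} (hP : P = B * P * A + Q)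
    (hA : Tendsto (A ^ ·) atTop (nhds 0)) (hB : Tendsto (B ^ ·) atTop (nhds 0)) :
    Tendsto (fun k ↦ ∑ j ∈ range k, B ^ j * Q * A ^ j) atTop (nhds P) := by
  have hrem : Tendsto (fun k ↦ B ^ k * P * A ^ k) atTop (nhds 0) := by
    simpa using (hB.mul_const P).mul hA
  refine (sub_zero P ▸ tendsto_const_nhds.sub hrem).congr fun k ↦ ?_
  rw [sub_eq_iff_eq_add, ← eq_sum_range_pow_mul_mul_pow_add hP]

theorem Matrix.trace_transpose_mul_self_mul_nonneg {m n : Type*} [Fintype m] [Fintype n]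
    {Ω : Matrix n n ℝ} (hΩ : Ω.PosSemidef) (M : Matrix m n ℝ) : 0 ≤ (Mᵀ * M * Ω).trace := by
  rw [Matrix.mul_assoc, trace_mul_comm]
  simpa using (hΩ.mul_mul_conjTranspose_same M).trace_nonneg

theorem hasSum_pow_mul_sum_range {γ S : ℝ} {s : ℕ → ℝ} (hγ₀ : 0 ≤ γ) (hγ₁ : γ < 1)
    (h : HasSum (fun j ↦ γ ^ j * s j) S) :
    HasSum (fun i ↦ γ ^ i * ∑ j ∈ range i, s j) (γ / (1 - γ) * S) := by
  have hgeom := summable_geometric_of_lt_one hγ₀ hγ₁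
  have hcauchy := hasSum_sum_range_mul_of_summable_norm h.summable.norm hgeom.norm
  rw [h.tsum_eq, tsum_geometric_of_lt_one hγ₀ hγ₁] at hcauchy
  refine (hasSum_nat_add_iff' 1).mp ?_
  rw [sum_range_one, range_zero, sum_empty, mul_zero, sub_zero,
    show γ / (1 - γ) * S = γ * (S * (1 - γ)⁻¹) by ring]
  refine (hcauchy.mul_left γ).congr_fun fun i ↦ ?_
  rw [mul_sum, mul_sum]
  refine sum_congr rfl fun j hj ↦ ?_
  obtain ⟨d, rfl⟩ := Nat.exists_eq_add_of_le (mem_range_succ_iff.mp hj)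
  rw [Nat.add_sub_cancel_left, pow_add, pow_succ]
  ring

theorem stmt1_general {n m : ℕ} (Φ : Matrix (Fin n) (Fin n) ℝ) (C : Matrix (Fin m) (Fin n) ℝ)
    (Ω : Matrix (Fin n) (Fin n) ℝ) (hΩ : Ω.PosSemidef)
    (γ : ℝ) (hγ : γ ∈ Set.Ioo (0 : ℝ) 1)
    (hstabΦ : Tendsto (fun i : ℕ => Φ ^ i) atTop (nhds 0))
    (X : ℕ → Matrix (Fin n) (Fin n) ℝ)
    (hX : ∀ i : ℕ, X i = ∑ j ∈ Finset.range i, Φ ^ j * Ω * (Φᵀ) ^ j)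
    (P : Matrix (Fin n) (Fin n) ℝ)
    (hP : P = γ • (Φᵀ * P * Φ) + Cᵀ * C) :
    ∑' i : ℕ, γ ^ i * (Cᵀ * C * X i).trace = γ / (1 - γ) * (Ω * P).trace := by
  obtain ⟨hγ₀, hγ₁⟩ := hγ
  set s : ℕ → ℝ := fun j ↦ (Cᵀ * C * (Φ ^ j * Ω * Φᵀ ^ j)).trace
  have hs : ∀ j, s j = ((C * Φ ^ j)ᵀ * (C * Φ ^ j) * Ω).trace := fun j ↦ by
    rw [transpose_mul, transpose_pow, Matrix.mul_assoc, Matrix.mul_assoc, trace_mul_comm]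
    simp only [s, Matrix.mul_assoc]
  have hterm : ∀ j, γ ^ j * s j = ((γ • Φᵀ) ^ j * (Cᵀ * C) * Φ ^ j * Ω).trace := fun j ↦ by
    rw [hs, smul_pow, smul_mul_assoc, smul_mul_assoc, smul_mul_assoc, trace_smul, smul_eq_mul]
    simp only [transpose_mul, transpose_pow, Matrix.mul_assoc]
  have hnonneg : ∀ j, 0 ≤ γ ^ j * s j := fun j ↦
    mul_nonneg (pow_nonneg hγ₀.le j) (hs j ▸ trace_transpose_mul_self_mul_nonneg hΩ _)
  have hpowT : Tendsto ((γ • Φᵀ) ^ ·) atTop (nhds 0) := by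
    simpa [smul_pow, ← transpose_pow] using
      (tendsto_pow_atTop_nhds_zero_of_lt_one hγ₀.le hγ₁).smul
        ((continuous_id.matrix_transpose.tendsto 0).comp hstabΦ)
  have hP' : P = γ • Φᵀ * P * Φ + Cᵀ * C := by rwa [smul_mul_assoc, smul_mul_assoc]
  have hpartial : Tendsto (fun k ↦ ∑ j ∈ range k, γ ^ j * s j) atTop (nhds (Ω * P).trace) := by
    have := ((continuous_id.matrix_mul (continuous_const (y := Ω))).matrix_trace.tendsto P).comp
      (tendsto_sum_range_pow_mul_mul_pow hP' hstabΦ hpowT)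
    simpa only [Function.comp_def, id, sum_mul, trace_sum, ← hterm, trace_mul_comm P Ω] using this
  have hsum := (hasSum_iff_tendsto_nat_of_nonneg hnonneg _).mpr hpartial
  exact ((hasSum_pow_mul_sum_range hγ₀.le hγ₁ hsum).congr_fun fun i ↦ by
    rw [hX, mul_sum, trace_sum]).tsum_eq

/-- With `Φ` Schur stable and `√γ·Φ` Schur stable, `Ω ⪰ 0`,
`X_0 = 0`, `X_i = ∑_{j<i} Φ^j Ω (Φᵀ)^j`, and `P̃` solving `P̃ = γ Φᵀ P̃ Φ + Cᵀ C`,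
we have `∑_{i=0}^∞ γ^i tr(Cᵀ C X_i) = (γ/(1−γ)) tr(Ω P̃)`. -/
theorem stmt1 {n m : ℕ} (Φ : Matrix (Fin n) (Fin n) ℝ) (C : Matrix (Fin m) (Fin n) ℝ)
    (Ω : Matrix (Fin n) (Fin n) ℝ) (hΩ : Ω.PosSemidef)
    (γ : ℝ) (hγ : γ ∈ Set.Ioo (0 : ℝ) 1)
    (hstabΦ : Tendsto (fun i : ℕ => Φ ^ i) atTop (nhds 0))
    (hstab : Tendsto (fun i : ℕ => (Real.sqrt γ • Φ) ^ i) atTop (nhds 0))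
    (X : ℕ → Matrix (Fin n) (Fin n) ℝ)
    (hX : ∀ i : ℕ, X i = ∑ j ∈ Finset.range i, Φ ^ j * Ω * (Φᵀ) ^ j)
    (P : Matrix (Fin n) (Fin n) ℝ)
    (hP : P = γ • (Φᵀ * P * Φ) + Cᵀ * C) :
    ∑' i : ℕ, γ ^ i * (Cᵀ * C * X i).trace = γ / (1 - γ) * (Ω * P).trace :=
  stmt1_general Φ C Ω hΩ γ hγ hstabΦ X hX P hP
end

section
/- Suppose for each μ ∈ (0,1], P̄(μ) ⪰ 0 and P̂(μ) ⪰ 0 are matrices such that for every positive semidefinite Z and all μ₁, μ₂ ∈ (0,1]: tr(Z((1−μ₁)P̄(μ₁) + μ₁P̂(μ₁))) ≤ tr(Z((1−μ₁)P̄(μ₂) + μ₁P̂(μ₂))) (optimality of the pair at μ₁ for the μ₁-weighted objective). Then for 0 < μ₁ ≤ μ₂ ≤ 1 one has P̄(μ₁) ⪯ P̄(μ₂) and P̂(μ₁) ⪰ P̂(μ₂). -/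
/-!
Fix a positive semidefinite `Z` and write `a(μ) = tr(Z P̄(μ))`, `b(μ) = tr(Z P̂(μ))`. Optimality at
`μ₁` against `μ₂` and at `μ₂` against `μ₁` gives two scalar inequalities; weighting them by `μ₂`, `μ₁`
(resp. `1 - μ₂`, `1 - μ₁`) and adding yields `(μ₂ - μ₁)(a(μ₂) - a(μ₁)) ≥ 0` and
`(μ₂ - μ₁)(b(μ₁) - b(μ₂)) ≥ 0`. Testing against the rank-one matrices `Z = x xᴴ` turns trace
nonnegativity into positive semidefiniteness.
-/

open Matrix

theorem le_and_le_of_scalarization_optimal {𝕜 : Type*} [Field 𝕜] [LinearOrder 𝕜]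
    [IsStrictOrderedRing 𝕜] {μ₁ μ₂ a₁ a₂ b₁ b₂ : 𝕜} (h₁ : 0 ≤ μ₁) (h₁₂ : μ₁ < μ₂) (h₂ : μ₂ ≤ 1)
    (hopt₁ : (1 - μ₁) * a₁ + μ₁ * b₁ ≤ (1 - μ₁) * a₂ + μ₁ * b₂)
    (hopt₂ : (1 - μ₂) * a₂ + μ₂ * b₂ ≤ (1 - μ₂) * a₁ + μ₂ * b₁) :
    a₁ ≤ a₂ ∧ b₂ ≤ b₁ := by
  have ha : 0 ≤ (μ₂ - μ₁) * (a₂ - a₁) := by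
    linarith [mul_le_mul_of_nonneg_left hopt₁ (h₁.trans h₁₂.le), mul_le_mul_of_nonneg_left hopt₂ h₁]
  have hb : 0 ≤ (μ₂ - μ₁) * (b₁ - b₂) := by
    linarith [mul_le_mul_of_nonneg_left hopt₁ (sub_nonneg.2 h₂),
      mul_le_mul_of_nonneg_left hopt₂ (sub_nonneg.2 (h₁₂.le.trans h₂))]
  have hμ : 0 < μ₂ - μ₁ := sub_pos.2 h₁₂
  exact ⟨sub_nonneg.1 ((mul_nonneg_iff_of_pos_left hμ).1 ha),
    sub_nonneg.1 ((mul_nonneg_iff_of_pos_left hμ).1 hb)⟩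

theorem Matrix.PosSemidef.of_trace_mul_nonneg {n R : Type*} [Fintype n] [CommRing R]
    [PartialOrder R] [StarRing R] [StarOrderedRing R] {M : Matrix n n R} (hM : M.IsHermitian)
    (h : ∀ Z : Matrix n n R, Z.PosSemidef → 0 ≤ (Z * M).trace) : M.PosSemidef :=
  .of_dotProduct_mulVec_nonneg hM fun x => by
    rw [dotProduct_mulVec, dotProduct_comm]
    simpa only [vecMulVec_mul, trace_vecMulVec] using h _ (posSemidef_vecMulVec_self_star x)

/-- Monotonicity of `P̄` (non-decreasing) and `P̂` (non-increasing) in the Loewner order,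
given that each pair `(P̄(μ), P̂(μ))` is trace-optimal for the `μ`-weighted objective. -/
theorem stmt5 {n : ℕ} (Pbar Phat : ℝ → Matrix (Fin n) (Fin n) ℝ)
    (hPbar : ∀ μ ∈ Set.Ioc (0 : ℝ) 1, (Pbar μ).PosSemidef)
    (hPhat : ∀ μ ∈ Set.Ioc (0 : ℝ) 1, (Phat μ).PosSemidef)
    (hopt : ∀ Z : Matrix (Fin n) (Fin n) ℝ, Z.PosSemidef →
      ∀ μ1 ∈ Set.Ioc (0 : ℝ) 1, ∀ μ2 ∈ Set.Ioc (0 : ℝ) 1,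
        (Z * ((1 - μ1) • Pbar μ1 + μ1 • Phat μ1)).trace ≤
          (Z * ((1 - μ1) • Pbar μ2 + μ1 • Phat μ2)).trace)
    (μ1 μ2 : ℝ) (h1 : 0 < μ1) (h12 : μ1 ≤ μ2) (h2 : μ2 ≤ 1) :
    (Pbar μ2 - Pbar μ1).PosSemidef ∧ (Phat μ1 - Phat μ2).PosSemidef := by
  rcases h12.eq_or_lt with rfl | hlt
  · simp [PosSemidef.zero]
  have hm1 : μ1 ∈ Set.Ioc (0 : ℝ) 1 := ⟨h1, h12.trans h2⟩
  have hm2 : μ2 ∈ Set.Ioc (0 : ℝ) 1 := ⟨h1.trans hlt, h2⟩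
  have key (Z : Matrix (Fin n) (Fin n) ℝ) (hZ : Z.PosSemidef) :
      (Z * Pbar μ1).trace ≤ (Z * Pbar μ2).trace ∧ (Z * Phat μ2).trace ≤ (Z * Phat μ1).trace := by
    have hopt₁ := hopt Z hZ μ1 hm1 μ2 hm2
    have hopt₂ := hopt Z hZ μ2 hm2 μ1 hm1
    simp only [Matrix.mul_add, Matrix.mul_smul, trace_add, trace_smul, smul_eq_mul] at hopt₁ hopt₂
    exact le_and_le_of_scalarization_optimal h1.le hlt h2 hopt₁ hopt₂
  refine ⟨.of_trace_mul_nonneg ((hPbar μ2 hm2).isHermitian.sub (hPbar μ1 hm1).isHermitian)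
      fun Z hZ => ?_, .of_trace_mul_nonneg
      ((hPhat μ1 hm1).isHermitian.sub (hPhat μ2 hm2).isHermitian) fun Z hZ => ?_⟩
  · simpa only [Matrix.mul_sub, trace_sub, sub_nonneg] using (key Z hZ).1
  · simpa only [Matrix.mul_sub, trace_sub, sub_nonneg] using (key Z hZ).2
end

section
/- Let (ε_k)_{k≥0} be a sequence of nonnegative random variables adapted to a filtration, and (x_k) a state process, with ε₀ = e and satisfying γ E[ε_{k+1} | x_k] ≤ ε_k − ‖C x_k‖² for all k ≥ 0, where γ ∈ (0,1). Then, using Chebyshev's bound P{‖C x_k‖ ≥ 1 | x_k measurable information} ≤ E[‖C x_k‖²], the discounted sum of violation probabilities satisfies ∑_{k=0}^∞ γ^k P{‖C x_k‖ ≥ 1} ≤ e. -/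
/-!
Integrating the drift condition gives the deterministic recursion
`γ E ε_{k+1} ≤ E ε_k − E‖C x_k‖²`, which telescopes to
`∑_{k<n} γ^k E‖C x_k‖² + γ^n E ε_n ≤ E ε_0 = e`. Since `ε_n ≥ 0`, the discounted second
moments sum to at most `e`, and by Markov's inequality each violation probability
`P{‖C x_k‖ ≥ 1} = P{‖C x_k‖² ≥ 1}` is at most `E‖C x_k‖²`.
-/

open MeasureTheory Matrix Finset

section Telescoping

variable {γ : ℝ} {a b : ℕ → ℝ}

theorem sum_range_pow_mul_add_pow_mul_le_of_drift (hγ : 0 ≤ γ)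
    (hdrift : ∀ k, γ * a (k + 1) ≤ a k - b k) (n : ℕ) :
    ∑ k ∈ range n, γ ^ k * b k + γ ^ n * a n ≤ a 0 := by
  induction n with
  | zero => simp
  | succ n ih =>
    have hstep : γ ^ (n + 1) * a (n + 1) ≤ γ ^ n * (a n - b n) := by
      rw [pow_succ, mul_assoc]
      exact mul_le_mul_of_nonneg_left (hdrift n) (pow_nonneg hγ n)
    rw [sum_range_succ]
    linarith

theorem sum_range_pow_mul_le_of_drift (hγ : 0 ≤ γ) (ha : ∀ k, 0 ≤ a k)
    (hdrift : ∀ k, γ * a (k + 1) ≤ a k - b k) (n : ℕ) :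
    ∑ k ∈ range n, γ ^ k * b k ≤ a 0 := by
  have := sum_range_pow_mul_add_pow_mul_le_of_drift hγ hdrift n
  nlinarith [mul_nonneg (pow_nonneg hγ n) (ha n)]

end Telescoping

theorem mul_integral_le_of_ae_mul_condExp_le {Ω : Type*} {m m₀ : MeasurableSpace Ω}
    {μ : Measure Ω} [IsFiniteMeasure μ] (hm : m ≤ m₀) {f g h : Ω → ℝ} (γ : ℝ)
    (hg : Integrable g μ) (hh : Integrable h μ)
    (hle : ∀ᵐ ω ∂μ, γ * μ[f | m] ω ≤ g ω - h ω) :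
    γ * ∫ ω, f ω ∂μ ≤ ∫ ω, g ω ∂μ - ∫ ω, h ω ∂μ := by
  have := integral_mono_ae (g := fun ω => g ω - h ω)
    (integrable_condExp.const_mul γ) (hg.sub hh) hle
  rwa [integral_const_mul, integral_condExp hm, integral_sub hg hh] at this

theorem measureReal_one_le_sqrt_le_integral {Ω : Type*} {m₀ : MeasurableSpace Ω}
    {μ : Measure Ω} {f : Ω → ℝ} (hf : 0 ≤ᵐ[μ] f) (hfi : Integrable f μ) :
    μ.real {ω | 1 ≤ √(f ω)} ≤ ∫ ω, f ω ∂μ := by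
  simpa only [Real.one_le_sqrt, one_mul] using mul_meas_ge_le_integral_of_nonneg hf hfi 1

theorem stmt7_general {Ωs : Type*} {m0 : MeasurableSpace Ωs} (μ : Measure Ωs)
    [IsProbabilityMeasure μ] (ℱ : Filtration ℕ m0)
    {nc nx : ℕ} (C : Matrix (Fin nc) (Fin nx) ℝ)
    (γ : ℝ) (hγ : γ ∈ Set.Ioo (0 : ℝ) 1) (e : ℝ)
    (x : ℕ → Ωs → Fin nx → ℝ) (ε : ℕ → Ωs → ℝ)
    (hεint : ∀ k, Integrable (ε k) μ)
    (hxint : ∀ k, Integrable (fun ω => (C.mulVec (x k ω)) ⬝ᵥ (C.mulVec (x k ω))) μ)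
    (hεnn : ∀ k ω, 0 ≤ ε k ω)
    (hε0 : ∀ ω, ε 0 ω = e)
    (hdrift : ∀ k, ∀ᵐ ω ∂μ,
      γ * (μ[ε (k + 1) | ℱ k]) ω ≤
        ε k ω - (C.mulVec (x k ω)) ⬝ᵥ (C.mulVec (x k ω))) :
    ∑' k : ℕ, γ ^ k *
        (μ {ω | 1 ≤ Real.sqrt ((C.mulVec (x k ω)) ⬝ᵥ (C.mulVec (x k ω)))}).toReal
      ≤ e := by
  set v : ℕ → Ωs → ℝ := fun k ω => (C.mulVec (x k ω)) ⬝ᵥ (C.mulVec (x k ω))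
  have hvnn : ∀ k ω, 0 ≤ v k ω := fun k ω => Fintype.sum_nonneg fun i => mul_self_nonneg _
  have hγ0 : 0 ≤ γ := hγ.1.le
  have hmoments (n : ℕ) : ∑ k ∈ range n, γ ^ k * ∫ ω, v k ω ∂μ ≤ e := by
    have := sum_range_pow_mul_le_of_drift hγ0 (fun k => integral_nonneg (hεnn k))
      (fun k => mul_integral_le_of_ae_mul_condExp_le (ℱ.le k) γ (hεint k) (hxint k) (hdrift k))
      n
    simpa [hε0] using this
  refine Real.tsum_le_of_sum_range_le
    (fun k => mul_nonneg (pow_nonneg hγ0 k) ENNReal.toReal_nonneg) fun n => ?_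
  calc ∑ k ∈ range n, γ ^ k * μ.real {ω | 1 ≤ √(v k ω)}
      ≤ ∑ k ∈ range n, γ ^ k * ∫ ω, v k ω ∂μ :=
        sum_le_sum fun k _ => mul_le_mul_of_nonneg_left
          (measureReal_one_le_sqrt_le_integral (.of_forall (hvnn k)) (hxint k)) (pow_nonneg hγ0 k)
    _ ≤ e := hmoments n

/-- Closed-loop chance-constraint satisfaction: if `ε₀ = e` and
`γ E[ε_{k+1} | ℱ_k] ≤ ε_k − ‖C x_k‖²` for all `k`, then the discounted sum of
violation probabilities satisfies `∑_{k=0}^∞ γ^k P{‖C x_k‖ ≥ 1} ≤ e`. -/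
theorem stmt7 {Ωs : Type*} {m0 : MeasurableSpace Ωs} (μ : Measure Ωs)
    [IsProbabilityMeasure μ] (ℱ : Filtration ℕ m0)
    {nc nx : ℕ} (C : Matrix (Fin nc) (Fin nx) ℝ)
    (γ : ℝ) (hγ : γ ∈ Set.Ioo (0 : ℝ) 1) (e : ℝ) (he : 0 < e)
    (x : ℕ → Ωs → Fin nx → ℝ) (ε : ℕ → Ωs → ℝ)
    (hxmeas : ∀ k, StronglyMeasurable[ℱ k] (x k))
    (hεmeas : ∀ k, StronglyMeasurable[ℱ k] (ε k))
    (hεint : ∀ k, Integrable (ε k) μ)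
    (hxint : ∀ k, Integrable (fun ω => (C.mulVec (x k ω)) ⬝ᵥ (C.mulVec (x k ω))) μ)
    (hεnn : ∀ k ω, 0 ≤ ε k ω)
    (hε0 : ∀ ω, ε 0 ω = e)
    (hdrift : ∀ k, ∀ᵐ ω ∂μ,
      γ * (μ[ε (k + 1) | ℱ k]) ω ≤
        ε k ω - (C.mulVec (x k ω)) ⬝ᵥ (C.mulVec (x k ω))) :
    ∑' k : ℕ, γ ^ k *
        (μ {ω | 1 ≤ Real.sqrt ((C.mulVec (x k ω)) ⬝ᵥ (C.mulVec (x k ω)))}).toReal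
      ≤ e :=
  stmt7_general μ ℱ C γ hγ e x ε hεint hxint hεnn hε0 hdrift
end
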